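/- Fix a ∈ (0,1/2) and let ρ be the V-path quasi-metric on the dyadic rationals of [0,1]. Suppose z_0, z_1, z_2 form a special triangle: z_1 lies on the left path from z_0, z_2 lies on the right path from z_0, and z_2 lies on the right path from z_1. Let n = ℓ(z_0) and m = ℓ(z_1). Then ρ(z_1,z_0) + ρ(z_0,z_2) − ρ(z_1,z_2) = τ_n − τ_m ≤ 0, where τ_k = a + ⋯ + a^{k-1} + 2a^k. -/

import Mathlib

/-! Summing the V-path recursion along repeated left (right) steps gives
`ρ(0,z) = ρ(0,lⁱz) + ρ(lⁱz,z)` and `ρ(z,1) = ρ(z,rʲz) + ρ(rʲz,1)`. Applied to the three sides of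
the triangle, the defect telescopes to `(ρ(0,z₀) + ρ(z₀,1)) - (ρ(0,z₁) + ρ(z₁,1)) = τ_n - τ_m`.
The identity `ρ(0,z) + ρ(z,1) = τ_ℓ(z)` follows by induction on the level, since one neighbour
of `z` has level `ℓ(z) - 1` and the other neighbour of `z` is also a neighbour of that one.
The sign comes from `τ_{p+1} - τ_p = a^p (2a - 1)` for `p ≥ 1` and `ℓ(z₁) ≤ ℓ(z₀)`. -/

/-- A rational is dyadic if it can be written as `k / 2^n`. -/
def IsDyadic (q : ℚ) : Prop := ∃ (k : ℤ) (n : ℕ), q = (k : ℚ) / 2 ^ n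

/-- Membership in `Z`, the set of dyadic rationals of `[0,1]`. -/
def InZ (q : ℚ) : Prop := 0 ≤ q ∧ q ≤ 1 ∧ IsDyadic q

/-- The level of a dyadic rational: the least `n` with `q = k / 2^n` for some
integer `k`.  The endpoints `0` and `1` have level `0`. -/
noncomputable def level (q : ℚ) : ℕ := sInf {n : ℕ | ∃ k : ℤ, q = (k : ℚ) / 2 ^ n}

/-- The left neighbor `l(z) = (k-1)/2^n` of `z = k/2^n` (in lowest terms,
`k` odd, `n ≥ 1`); points of level `0` are fixed. -/
noncomputable def lnb (q : ℚ) : ℚ :=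
  if level q = 0 then q else q - (1 / 2 : ℚ) ^ level q

/-- The right neighbor `r(z) = (k+1)/2^n` of `z = k/2^n` (in lowest terms,
`k` odd, `n ≥ 1`); points of level `0` are fixed. -/
noncomputable def rnb (q : ℚ) : ℚ :=
  if level q = 0 then q else q + (1 / 2 : ℚ) ^ level q

/-- `ρ` is the V-path quasi-metric on the dyadic rationals of `[0,1]` with
parameter `a`: it is symmetric, vanishes on the diagonal, is nonnegative on
`Z`, satisfies `ρ(0,1) = 1`, and decomposes along the unique V-shaped path:
for `z < z'` in `Z` the first edge taken from the higher-level endpoint has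
length `a^level`. These properties characterize the sum of edge lengths
`a^{ℓ(w)}` along the V-shaped path joining `z` and `z'`. -/
def IsVPath (a : ℝ) (ρ : ℚ → ℚ → ℝ) : Prop :=
  (∀ z z', ρ z z' = ρ z' z) ∧
  (∀ z, ρ z z = 0) ∧
  (∀ z z', InZ z → InZ z' → 0 ≤ ρ z z') ∧
  ρ 0 1 = 1 ∧
  (∀ z z', InZ z → InZ z' → z < z' → 1 ≤ level z → level z' ≤ level z →
    ρ z z' = a ^ level z + ρ (rnb z) z') ∧
  (∀ z z', InZ z → InZ z' → z < z' → level z < level z' →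
    ρ z z' = ρ z (lnb z') + a ^ level z')

/-- `τ_n = a + a² + ⋯ + a^{n-1} + 2 a^n`. -/
noncomputable def tau (a : ℝ) (n : ℕ) : ℝ :=
  (∑ i ∈ Finset.Ico 1 n, a ^ i) + 2 * a ^ n


lemma inZ_zero : InZ 0 := ⟨le_rfl, zero_le_one, 0, 0, by norm_num⟩

lemma inZ_one : InZ 1 := ⟨zero_le_one, le_rfl, 1, 0, by norm_num⟩

lemma level_le_of_eq_div {q : ℚ} {k : ℤ} {n : ℕ} (h : q = k / 2 ^ n) : level q ≤ n :=
  Nat.sInf_le ⟨k, h⟩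

lemma level_zero : level 0 = 0 :=
  Nat.le_zero.mp (level_le_of_eq_div (k := 0) (n := 0) (by norm_num))

lemma level_one : level 1 = 0 :=
  Nat.le_zero.mp (level_le_of_eq_div (k := 1) (n := 0) (by norm_num))

lemma level_eq_of_odd {q : ℚ} {k : ℤ} {n : ℕ} (hk : Odd k) (h : q = k / 2 ^ n) :
    level q = n := by
  refine le_antisymm (level_le_of_eq_div h) (le_csInf ⟨n, k, h⟩ ?_)
  rintro j ⟨k', hk'⟩
  by_contra! hjn
  have hk_eq : k = k' * 2 ^ (n - j) := by
    have : (k : ℚ) = k' * 2 ^ (n - j) := by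
      rw [h, div_eq_div_iff (by positivity) (by positivity)] at hk'
      rw [← pow_sub_mul_pow 2 hjn.le, ← mul_assoc] at hk'
      exact mul_right_cancel₀ (by positivity) hk'
    exact_mod_cast this
  have : Even k := hk_eq ▸ (Int.even_pow.mpr ⟨even_two, by omega⟩).mul_left k'
  exact Int.not_even_iff_odd.mpr hk this

lemma exists_odd_eq_div_pow_level {q : ℚ} (hq : IsDyadic q) (hl : 1 ≤ level q) :
    ∃ k : ℤ, Odd k ∧ q = k / 2 ^ level q := by
  obtain ⟨k, hk⟩ : ∃ k : ℤ, q = k / 2 ^ level q := by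
    obtain ⟨k, n, h⟩ := hq
    exact Nat.sInf_mem (⟨n, k, h⟩ : {n : ℕ | ∃ k : ℤ, q = k / 2 ^ n}.Nonempty)
  refine ⟨k, Int.not_even_iff_odd.mp ?_, hk⟩
  rintro ⟨t, rfl⟩
  obtain ⟨n, hn⟩ : ∃ n, level q = n + 1 := ⟨level q - 1, by omega⟩
  have : q = t / 2 ^ n := by
    rw [hk, hn]
    push_cast
    field_simp
    ring
  have := level_le_of_eq_div this
  omega

lemma lnb_of_one_le_level {q : ℚ} (hl : 1 ≤ level q) : lnb q = q - (1 / 2) ^ level q :=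
  if_neg (by omega)

lemma rnb_of_one_le_level {q : ℚ} (hl : 1 ≤ level q) : rnb q = q + (1 / 2) ^ level q :=
  if_neg (by omega)

lemma exists_lnb_rnb_eq_div {q : ℚ} {n : ℕ} (hq : InZ q) (hl : level q = n + 1) :
    ∃ t : ℤ, lnb q = t / 2 ^ n ∧ rnb q = (t + 1 : ℤ) / 2 ^ n ∧ 0 ≤ t ∧ t + 1 ≤ 2 ^ n := by
  obtain ⟨k, ⟨t, rfl⟩, hk⟩ := exists_odd_eq_div_pow_level hq.2.2 (by omega)
  rw [hl] at hk
  have hlo : (0 : ℚ) ≤ (2 * t + 1 : ℤ) := by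
    have := hq.1
    rwa [hk, le_div_iff₀ (by positivity), zero_mul] at this
  have hhi : ((2 * t + 1 : ℤ) : ℚ) ≤ 2 ^ n * 2 := by
    have := hq.2.1
    rwa [hk, div_le_one (by positivity), pow_succ] at this
  have hlo' : 0 ≤ 2 * t + 1 := by exact_mod_cast hlo
  have hhi' : 2 * t + 1 ≤ 2 ^ n * 2 := by exact_mod_cast hhi
  refine ⟨t, ?_, ?_, by omega, by omega⟩
  · rw [lnb_of_one_le_level (by omega), hl, hk, one_div, inv_pow]
    push_cast
    field_simp
    ring
  · rw [rnb_of_one_le_level (by omega), hl, hk, one_div, inv_pow]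
    push_cast
    field_simp
    ring

lemma lnb_le (q : ℚ) : lnb q ≤ q := by
  unfold lnb
  split_ifs
  exacts [le_rfl, sub_le_self _ (by positivity)]

lemma le_rnb (q : ℚ) : q ≤ rnb q := by
  unfold rnb
  split_ifs
  exacts [le_rfl, le_add_of_nonneg_right (by positivity)]

lemma lnb_lt {q : ℚ} (hl : 1 ≤ level q) : lnb q < q := by
  rw [lnb_of_one_le_level hl]
  exact sub_lt_self _ (by positivity)

lemma lt_rnb {q : ℚ} (hl : 1 ≤ level q) : q < rnb q := by
  rw [rnb_of_one_le_level hl]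
  exact lt_add_of_pos_right _ (by positivity)

lemma inZ_lnb {q : ℚ} (hq : InZ q) : InZ (lnb q) := by
  by_cases h : level q = 0
  · rwa [lnb, if_pos h]
  obtain ⟨n, hn⟩ := Nat.exists_eq_add_one_of_ne_zero h
  obtain ⟨t, hl, -, ht0, ht1⟩ := exists_lnb_rnb_eq_div hq hn
  refine ⟨?_, ?_, t, n, hl⟩ <;> rw [hl]
  · positivity
  · rw [div_le_one (by positivity)]
    exact_mod_cast (Int.le_add_one le_rfl).trans ht1

lemma inZ_rnb {q : ℚ} (hq : InZ q) : InZ (rnb q) := by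
  by_cases h : level q = 0
  · rwa [rnb, if_pos h]
  obtain ⟨n, hn⟩ := Nat.exists_eq_add_one_of_ne_zero h
  obtain ⟨t, -, hr, ht0, ht1⟩ := exists_lnb_rnb_eq_div hq hn
  refine ⟨?_, ?_, t + 1, n, hr⟩ <;> rw [hr]
  · have : 0 ≤ t + 1 := by omega
    positivity
  · rw [div_le_one (by positivity)]
    exact_mod_cast ht1

lemma level_lnb_lt {q : ℚ} (hq : InZ q) (hl : 1 ≤ level q) : level (lnb q) < level q := by
  obtain ⟨n, hn⟩ := Nat.exists_eq_add_one_of_ne_zero (by omega : level q ≠ 0)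
  obtain ⟨t, hlnb, -⟩ := exists_lnb_rnb_eq_div hq hn
  exact hn ▸ Nat.lt_succ_of_le (level_le_of_eq_div hlnb)

lemma level_rnb_lt {q : ℚ} (hq : InZ q) (hl : 1 ≤ level q) : level (rnb q) < level q := by
  obtain ⟨n, hn⟩ := Nat.exists_eq_add_one_of_ne_zero (by omega : level q ≠ 0)
  obtain ⟨t, -, hrnb, -⟩ := exists_lnb_rnb_eq_div hq hn
  exact hn ▸ Nat.lt_succ_of_le (level_le_of_eq_div hrnb)

lemma level_lnb_le {q : ℚ} (hq : InZ q) : level (lnb q) ≤ level q := by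
  by_cases h : level q = 0
  · rw [lnb, if_pos h]
  · exact (level_lnb_lt hq (by omega)).le

lemma level_rnb_le {q : ℚ} (hq : InZ q) : level (rnb q) ≤ level q := by
  by_cases h : level q = 0
  · rw [rnb, if_pos h]
  · exact (level_rnb_lt hq (by omega)).le

lemma InZ.pos {q : ℚ} (hq : InZ q) (hl : 1 ≤ level q) : 0 < q :=
  (inZ_lnb hq).1.trans_lt (lnb_lt hl)

lemma InZ.lt_one {q : ℚ} (hq : InZ q) (hl : 1 ≤ level q) : q < 1 :=
  (lt_rnb hl).trans_le (inZ_rnb hq).2.1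

lemma inZ_lnb_iterate {q : ℚ} (hq : InZ q) (i : ℕ) : InZ (lnb^[i] q) :=
  Function.Iterate.rec InZ hq (fun _ hx => inZ_lnb hx) i

lemma inZ_rnb_iterate {q : ℚ} (hq : InZ q) (i : ℕ) : InZ (rnb^[i] q) :=
  Function.Iterate.rec InZ hq (fun _ hx => inZ_rnb hx) i

lemma lnb_iterate_le (q : ℚ) (i : ℕ) : lnb^[i] q ≤ q :=
  Function.iterate_le_id_of_le_id lnb_le i q

lemma le_rnb_iterate (q : ℚ) (i : ℕ) : q ≤ rnb^[i] q :=
  Function.id_le_iterate_of_id_le le_rnb i q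

lemma level_lnb_iterate_le {q : ℚ} (hq : InZ q) (i : ℕ) : level (lnb^[i] q) ≤ level q :=
  (Function.Iterate.rec (fun x => InZ x ∧ level x ≤ level q) ⟨hq, le_rfl⟩
    (fun _ hx => ⟨inZ_lnb hx.1, (level_lnb_le hx.1).trans hx.2⟩) i).2

lemma level_rnb_iterate_le {q : ℚ} (hq : InZ q) (i : ℕ) : level (rnb^[i] q) ≤ level q :=
  (Function.Iterate.rec (fun x => InZ x ∧ level x ≤ level q) ⟨hq, le_rfl⟩
    (fun _ hx => ⟨inZ_rnb hx.1, (level_rnb_le hx.1).trans hx.2⟩) i).2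

lemma exists_level_eq_of_level_eq_add_one {z : ℚ} {n : ℕ} (hz : InZ z) (hl : level z = n + 1)
    (hn : 1 ≤ n) : ∃ w, InZ w ∧ level w = n ∧
      (w = lnb z ∧ rnb w = rnb z ∨ w = rnb z ∧ lnb w = lnb z) := by
  obtain ⟨t, hlz, hrz, -⟩ := exists_lnb_rnb_eq_div hz hl
  rcases Int.even_or_odd t with ht | ht
  · have hlw : level (rnb z) = n := level_eq_of_odd ht.add_one hrz
    refine ⟨rnb z, inZ_rnb hz, hlw, .inr ⟨rfl, ?_⟩⟩
    rw [lnb_of_one_le_level (hlw ▸ hn), hlw, hrz, hlz, one_div, inv_pow]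
    push_cast
    field_simp
    ring
  · have hlw : level (lnb z) = n := level_eq_of_odd ht hlz
    refine ⟨lnb z, inZ_lnb hz, hlw, .inl ⟨rfl, ?_⟩⟩
    rw [rnb_of_one_le_level (hlw ▸ hn), hlw, hrz, hlz, one_div, inv_pow]
    push_cast
    field_simp

lemma tau_succ (a : ℝ) {n : ℕ} (hn : 1 ≤ n) :
    tau a (n + 1) + a ^ n = tau a n + 2 * a ^ (n + 1) := by
  rw [tau, tau, Finset.sum_Ico_succ_top hn]
  ring

lemma tau_antitone {a : ℝ} (ha0 : 0 ≤ a) (ha : a ≤ 1 / 2) : Antitone (tau a) := by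
  refine antitone_nat_of_succ_le fun n => ?_
  rcases Nat.eq_zero_or_pos n with rfl | hn
  · norm_num [tau]
    linarith
  · have hstep := tau_succ a hn
    rw [pow_succ] at hstep
    linarith [mul_nonneg (pow_nonneg ha0 n) (by linarith : (0 : ℝ) ≤ 1 - 2 * a)]

section VPath

variable {a : ℝ} {ρ : ℚ → ℚ → ℝ}

lemma IsVPath.rho_zero_eq (hρ : IsVPath a ρ) {z : ℚ} (hz : InZ z) (hl : 1 ≤ level z) :
    ρ 0 z = ρ 0 (lnb z) + a ^ level z :=
  hρ.2.2.2.2.2 0 z inZ_zero hz (hz.pos hl) (level_zero ▸ hl)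

lemma IsVPath.rho_one_eq (hρ : IsVPath a ρ) {z : ℚ} (hz : InZ z) (hl : 1 ≤ level z) :
    ρ z 1 = a ^ level z + ρ (rnb z) 1 :=
  hρ.2.2.2.2.1 z 1 hz inZ_one (hz.lt_one hl) hl (level_one ▸ Nat.zero_le _)

lemma IsVPath.rho_zero_eq_add_lnb_iterate (hρ : IsVPath a ρ) {z : ℚ} (hz : InZ z) (i : ℕ) :
    ρ 0 z = ρ 0 (lnb^[i] z) + ρ (lnb^[i] z) z := by
  induction i generalizing z with
  | zero => simp [hρ.2.1]
  | succ i ih =>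
    rw [Function.iterate_succ_apply]
    by_cases h : level z = 0
    · rw [show lnb z = z from if_pos h]
      exact ih hz
    have hl : 1 ≤ level z := by omega
    have hlz := inZ_lnb hz
    have hstep : ρ (lnb^[i] (lnb z)) z = ρ (lnb^[i] (lnb z)) (lnb z) + a ^ level z :=
      hρ.2.2.2.2.2 _ z (inZ_lnb_iterate hlz i) hz ((lnb_iterate_le _ i).trans_lt (lnb_lt hl))
        ((level_lnb_iterate_le hlz i).trans_lt (level_lnb_lt hz hl))
    rw [hρ.rho_zero_eq hz hl, ih hlz, hstep]
    ring

lemma IsVPath.rho_one_eq_add_rnb_iterate (hρ : IsVPath a ρ) {z : ℚ} (hz : InZ z) (i : ℕ) :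
    ρ z 1 = ρ z (rnb^[i] z) + ρ (rnb^[i] z) 1 := by
  induction i generalizing z with
  | zero => simp [hρ.2.1]
  | succ i ih =>
    rw [Function.iterate_succ_apply]
    by_cases h : level z = 0
    · rw [show rnb z = z from if_pos h]
      exact ih hz
    have hl : 1 ≤ level z := by omega
    have hrz := inZ_rnb hz
    have hstep : ρ z (rnb^[i] (rnb z)) = a ^ level z + ρ (rnb z) (rnb^[i] (rnb z)) :=
      hρ.2.2.2.2.1 z _ hz (inZ_rnb_iterate hrz i) ((lt_rnb hl).trans_le (le_rnb_iterate _ i)) hl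
        ((level_rnb_iterate_le hrz i).trans (level_rnb_lt hz hl).le)
    rw [hρ.rho_one_eq hz hl, ih hrz, hstep]
    ring

lemma IsVPath.rho_zero_add_rho_one (hρ : IsVPath a ρ) {n : ℕ} (hn : 1 ≤ n) {z : ℚ}
    (hz : InZ z) (hl : level z = n) : ρ 0 z + ρ z 1 = tau a n := by
  induction n, hn using Nat.le_induction generalizing z with
  | base =>
    obtain ⟨t, hlz, hrz, ht0, ht1⟩ := exists_lnb_rnb_eq_div hz hl
    obtain rfl : t = 0 := by rw [pow_zero] at ht1; omega
    rw [hρ.rho_zero_eq hz hl.ge, hρ.rho_one_eq hz hl.ge, hl, hlz, hrz]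
    norm_num [hρ.2.1, tau]
    ring
  | succ n hn ih =>
    rw [hρ.rho_zero_eq hz (hl ▸ le_add_self), hρ.rho_one_eq hz (hl ▸ le_add_self), hl]
    obtain ⟨w, hw, hlw, ⟨rfl, hrw⟩ | ⟨rfl, hlw'⟩⟩ :=
      exists_level_eq_of_level_eq_add_one hz hl hn
    · have := ih hw hlw
      rw [hρ.rho_one_eq hw (hlw ▸ hn), hrw, hlw] at this
      linarith [tau_succ a hn]
    · have := ih hw hlw
      rw [hρ.rho_zero_eq hw (hlw ▸ hn), hlw', hlw] at this
      linarith [tau_succ a hn]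

end VPath

theorem special_triangle_general (a : ℝ) (ha0 : 0 < a) (ha : a < 1 / 2)
    (ρ : ℚ → ℚ → ℝ) (hρ : IsVPath a ρ)
    (z0 z1 z2 : ℚ) (hz0 : InZ z0)
    (h1 : ∃ i : ℕ, z1 = lnb^[i] z0)
    (h2 : ∃ j : ℕ, z2 = rnb^[j] z0)
    (h3 : ∃ k : ℕ, z2 = rnb^[k] z1)
    (hl1 : 1 ≤ level z1) :
    ρ z1 z0 + ρ z0 z2 - ρ z1 z2 = tau a (level z0) - tau a (level z1) ∧
    tau a (level z0) - tau a (level z1) ≤ 0 := by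
  obtain ⟨i, rfl⟩ := h1
  obtain ⟨j, hj⟩ := h2
  obtain ⟨k, hk⟩ := h3
  have hz1 := inZ_lnb_iterate hz0 i
  have hlevel := level_lnb_iterate_le hz0 i
  have h01 := hρ.rho_zero_eq_add_lnb_iterate hz0 i
  have h02 := hj ▸ hρ.rho_one_eq_add_rnb_iterate hz0 j
  have h12 := hk ▸ hρ.rho_one_eq_add_rnb_iterate hz1 k
  have hτ0 := hρ.rho_zero_add_rho_one (hl1.trans hlevel) hz0 rfl
  have hτ1 := hρ.rho_zero_add_rho_one hl1 hz1 rfl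
  exact ⟨by linarith, sub_nonpos.2 (tau_antitone ha0.le ha.le hlevel)⟩

/-- For a special triangle `z_1 = l^i(z_0)`, `z_2 = r^j(z_0) = r^k(z_1)` with
`n = ℓ(z_0)`, `m = ℓ(z_1)` (both `≥ 1`):
`ρ(z_1,z_0) + ρ(z_0,z_2) − ρ(z_1,z_2) = τ_n − τ_m ≤ 0`. -/
theorem special_triangle (a : ℝ) (ha0 : 0 < a) (ha : a < 1 / 2)
    (ρ : ℚ → ℚ → ℝ) (hρ : IsVPath a ρ)
    (z0 z1 z2 : ℚ) (hz0 : InZ z0) (hz1 : InZ z1) (hz2 : InZ z2)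
    (h1 : ∃ i : ℕ, z1 = lnb^[i] z0)
    (h2 : ∃ j : ℕ, z2 = rnb^[j] z0)
    (h3 : ∃ k : ℕ, z2 = rnb^[k] z1)
    (hl0 : 1 ≤ level z0) (hl1 : 1 ≤ level z1) :
    ρ z1 z0 + ρ z0 z2 - ρ z1 z2 = tau a (level z0) - tau a (level z1) ∧
    tau a (level z0) - tau a (level z1) ≤ 0 :=
  special_triangle_general a ha0 ha ρ hρ z0 z1 z2 hz0 h1 h2 h3 hl1
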